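/- For any random variable R taking values in {1,…,N} and any k ∈ {0,…,N}, one has 1 - E[ k^{\underline{R}} / N^{\underline{R}} ] = ((N-k)/N) · ∑_{n=0}^{N-1} P(R > n) · ( k^{\underline{n}} / (N-1)^{\underline{n}} ). -/

import Mathlib

/-!
With `g r = k^{\underline r} / N^{\underline r}` one has `g 0 = 1` and
`g n - g (n + 1) = ((N - k) / N) · k^{\underline n} / (N - 1)^{\underline n}` for `n < N`.
Telescoping, `g R = g 0 - ∑_{n < N} 1{n < R} (g n - g (n + 1))`, and taking expectations turns
the indicators into tail probabilities.
-/

open MeasureTheory Finset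

theorem Nat.cast_descFactorial_succ {K : Type*} [Ring K] (k n : ℕ) :
    (k.descFactorial (n + 1) : K) = (k - n) * k.descFactorial n := by
  rcases le_or_gt n k with h | h
  · rw [Nat.descFactorial_succ, Nat.cast_mul, Nat.cast_sub h]
  · rw [Nat.descFactorial_of_lt h, Nat.descFactorial_of_lt (by omega)]
    simp

theorem Nat.cast_descFactorial_div_sub_succ {K : Type*} [Field K] [CharZero K] (k : ℕ) {N n : ℕ}
    (hn : n < N) :
    (k.descFactorial n : K) / N.descFactorial n - k.descFactorial (n + 1) / N.descFactorial (n + 1)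
      = (N - k) / N * (k.descFactorial n / (N - 1).descFactorial n) := by
  obtain ⟨M, rfl⟩ : ∃ M, N = M + 1 := ⟨N - 1, by omega⟩
  have hA : ((M + 1).descFactorial n : K) ≠ 0 := by
    exact_mod_cast (Nat.descFactorial_pos.mpr hn.le).ne'
  have hB : (M.descFactorial n : K) ≠ 0 := by
    exact_mod_cast (Nat.descFactorial_pos.mpr (by omega)).ne'
  have hrel : ((M + 1 : K) - n) * (M + 1).descFactorial n = (M + 1) * M.descFactorial n := by
    have h := Nat.cast_descFactorial_succ (K := K) (M + 1) n
    rw [Nat.succ_descFactorial_succ] at h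
    push_cast at h
    linear_combination -h
  rw [Nat.cast_descFactorial_succ k, Nat.succ_descFactorial_succ, Nat.add_sub_cancel]
  push_cast
  field_simp
  linear_combination (-(k.descFactorial n : K)) * hrel

theorem Finset.sum_range_ite_lt_sub_succ {G : Type*} [AddCommGroup G] (f : ℕ → G) {r N : ℕ}
    (hr : r ≤ N) :
    ∑ n ∈ range N, (if n < r then f n - f (n + 1) else 0) = f 0 - f r := by
  rw [← sum_filter, show (range N).filter (· < r) = range r by ext; simp; omega, sum_range_sub']

theorem MeasureTheory.integral_comp_eq_sub_sum_tail {Ω E : Type*} [MeasurableSpace Ω]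
    [NormedAddCommGroup E] [NormedSpace ℝ E] [CompleteSpace E]
    (μ : Measure Ω) [IsProbabilityMeasure μ] {R : Ω → ℕ} (hR : Measurable R) {N : ℕ}
    (hRN : ∀ ω, R ω ≤ N) (f : ℕ → E) :
    ∫ ω, f (R ω) ∂μ = f 0 - ∑ n ∈ range N, μ.real {ω | n < R ω} • (f n - f (n + 1)) := by
  have htail (n : ℕ) : MeasurableSet {ω | n < R ω} := hR measurableSet_Ioi
  have hpt (ω : Ω) : f (R ω) =
      f 0 - ∑ n ∈ range N, {ω | n < R ω}.indicator (fun _ ↦ f n - f (n + 1)) ω := by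
    simp only [Set.indicator_apply, Set.mem_ofPred_eq, sum_range_ite_lt_sub_succ f (hRN ω)]
    abel
  have hint (n : ℕ) : Integrable ({ω | n < R ω}.indicator fun _ ↦ f n - f (n + 1)) μ :=
    (integrable_const _).indicator (htail n)
  simp_rw [hpt]
  rw [integral_sub (integrable_const _) (integrable_finsetSum _ fun n _ ↦ hint n),
    integral_const, integral_finsetSum _ fun n _ ↦ hint n]
  simp [integral_indicator_const _ (htail _)]

theorem ancestral_type_tail_representation_general
    {Ω : Type*} [MeasurableSpace Ω] (μ : Measure Ω) [IsProbabilityMeasure μ]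
    (N : ℕ) (R : Ω → ℕ) (hR : Measurable R)
    (hrange : ∀ ω, R ω ∈ Finset.Icc 1 N)
    (k : ℕ) :
    1 - ∫ ω, ((Nat.descFactorial k (R ω) : ℝ) / (Nat.descFactorial N (R ω))) ∂μ
      = (((N : ℝ) - k) / N)
          * ∑ n ∈ Finset.range N,
              (μ {ω | n < R ω}).toReal
                * ((Nat.descFactorial k n : ℝ) / (Nat.descFactorial (N - 1) n)) := by
  have hRN (ω : Ω) : R ω ≤ N := (mem_Icc.mp (hrange ω)).2
  rw [integral_comp_eq_sub_sum_tail μ hR hRN fun r ↦ (k.descFactorial r : ℝ) / N.descFactorial r,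
    mul_sum]
  simp only [Nat.descFactorial_zero, Nat.cast_one, div_one, sub_sub_cancel, smul_eq_mul]
  refine sum_congr rfl fun n hn ↦ ?_
  rw [Nat.cast_descFactorial_div_sub_succ k (mem_range.mp hn), measureReal_def]
  ring

/-- Summation-by-parts representation of the ancestral type distribution: for a random
variable `R` with values in `{1,…,N}`,
`1 - E[k^{\underline R}/N^{\underline R}]
  = ((N-k)/N) ∑_{n=0}^{N-1} P(R > n) k^{\underline n}/(N-1)^{\underline n}`. -/
theorem ancestral_type_tail_representation
    {Ω : Type*} [MeasurableSpace Ω] (μ : Measure Ω) [IsProbabilityMeasure μ]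
    (N : ℕ) (hN : 1 ≤ N) (R : Ω → ℕ) (hR : Measurable R)
    (hrange : ∀ ω, R ω ∈ Finset.Icc 1 N)
    (k : ℕ) (hk : k ≤ N) :
    1 - ∫ ω, ((Nat.descFactorial k (R ω) : ℝ) / (Nat.descFactorial N (R ω))) ∂μ
      = (((N : ℝ) - k) / N)
          * ∑ n ∈ Finset.range N,
              (μ {ω | n < R ω}).toReal
                * ((Nat.descFactorial k n : ℝ) / (Nat.descFactorial (N - 1) n)) :=
  ancestral_type_tail_representation_general μ N R hR hrange k
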